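/- arXiv:2301.04041 — 9 statements merged into one kernel-verified Lean document; each statement's English description precedes it below -/
import Mathlib

section
/- Let p : ℝ^d → [0,∞) be a function, ε > 0, and D_ε = {x ∈ ℝ^d : p(x) > ε}. Let μ be a probability measure on ℝ^d with μ(D_ε) > 0, and let f₁, f₂ : ℝ^d → ℝ be μ-integrable functions such that |f₁(x) − f₂(x)|·p(x) ≤ δ for all x ∈ ℝ^d. Then |E_μ[f₁ | X ∈ D_ε] − E_μ[f₂ | X ∈ D_ε]| ≤ δ/ε, where E_μ[f | X ∈ D_ε] = (∫ f·1[D_ε] dμ)/μ(D_ε). (Strong T-robustness of ManifoldShap on the ε-density manifold, with T = 1/ε.) -/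
open MeasureTheory ProbabilityTheory

/-- Strong T-robustness of ManifoldShap on the ε-density manifold
`D_ε = {x | p x > ε}`, with `T = 1/ε`: if `|f₁ x − f₂ x| · p x ≤ δ` everywhere, then the
conditional expectations of `f₁` and `f₂` given `X ∈ D_ε` differ by at most `δ/ε`. -/
theorem manifoldShap_strong_T_robust {d : ℕ} (p : (Fin d → ℝ) → ℝ)
    (hp_meas : Measurable p) (hp_nonneg : ∀ x, 0 ≤ p x)
    (ε δ : ℝ) (hε : 0 < ε)
    (μ : Measure (Fin d → ℝ)) [IsProbabilityMeasure μ]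
    (hDpos : 0 < μ {x | ε < p x})
    (f₁ f₂ : (Fin d → ℝ) → ℝ) (hf₁ : Integrable f₁ μ) (hf₂ : Integrable f₂ μ)
    (hpert : ∀ x, |f₁ x - f₂ x| * p x ≤ δ) :
    |(∫ x, ({x | ε < p x} : Set (Fin d → ℝ)).indicator f₁ x ∂μ) / (μ {x | ε < p x}).toReal -
      (∫ x, ({x | ε < p x} : Set (Fin d → ℝ)).indicator f₂ x ∂μ) / (μ {x | ε < p x}).toReal|
      ≤ δ / ε := by
  set Z : Set (Fin d → ℝ) := {x | ε < p x} with hZdef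
  have hZ : MeasurableSet Z := measurableSet_lt measurable_const hp_meas
  have hZne : Z.Nonempty := by
    by_contra h
    rw [Set.not_nonempty_iff_eq_empty] at h
    rw [h] at hDpos
    simp at hDpos
  obtain ⟨x₀, hx₀⟩ := hZne
  have hδ : 0 ≤ δ := le_trans (mul_nonneg (abs_nonneg _) (hp_nonneg x₀)) (hpert x₀)
  have hδε : 0 ≤ δ / ε := div_nonneg hδ hε.le
  have hc : 0 < (μ Z).toReal :=
    ENNReal.toReal_pos hDpos.ne' (measure_ne_top μ Z)
  have hind₁ : Integrable (Z.indicator f₁) μ := hf₁.indicator hZ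
  have hind₂ : Integrable (Z.indicator f₂) μ := hf₂.indicator hZ
  -- pointwise bound on Z
  have hptw : ∀ x, |Z.indicator f₁ x - Z.indicator f₂ x| ≤ Z.indicator (fun _ => δ / ε) x := by
    intro x
    by_cases hx : x ∈ Z
    · simp only [Set.indicator_of_mem hx]
      have hpx : ε < p x := hx
      have h1 : |f₁ x - f₂ x| * ε ≤ δ := by
        calc |f₁ x - f₂ x| * ε ≤ |f₁ x - f₂ x| * p x :=
              mul_le_mul_of_nonneg_left hpx.le (abs_nonneg _)
          _ ≤ δ := hpert x
      exact (le_div_iff₀ hε).mpr h1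
    · simp [Set.indicator_of_notMem hx]
  have hkey : |(∫ x, Z.indicator f₁ x ∂μ) - ∫ x, Z.indicator f₂ x ∂μ| ≤ δ / ε * (μ Z).toReal := by
    rw [← integral_sub hind₁ hind₂]
    calc |∫ x, (Z.indicator f₁ x - Z.indicator f₂ x) ∂μ|
        ≤ ∫ x, |Z.indicator f₁ x - Z.indicator f₂ x| ∂μ := by simpa [Real.norm_eq_abs] using norm_integral_le_integral_norm (fun x => Z.indicator f₁ x - Z.indicator f₂ x)
      _ ≤ ∫ x, Z.indicator (fun _ => δ / ε) x ∂μ := by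
          apply integral_mono ((hind₁.sub hind₂).abs)
            ((integrable_const (δ / ε)).indicator hZ) hptw
      _ = δ / ε * (μ Z).toReal := by
          rw [integral_indicator_const _ hZ]
          ring_nf
          rfl
  rw [div_sub_div_same, abs_div, abs_of_pos hc, div_le_iff₀ hc]
  calc |(∫ x, Z.indicator f₁ x ∂μ) - ∫ x, Z.indicator f₂ x ∂μ| ≤ δ / ε * (μ Z).toReal := hkey
    _ = δ / ε * (μ Z).toReal := rfl
end

section
/- Let μ be a probability measure on ℝ^d and let Z' ⊆ ℝ^d be a measurable set with μ(Z') < 1. Then for every T ≥ 0 there exist bounded measurable functions f₁, f₂ : ℝ^d → ℝ such that f₁(x) = f₂(x) for all x ∈ Z' but |∫ f₁ dμ − ∫ f₂ dμ| > T. Consequently, any value function whose value at the empty coalition is v(∅) = E_μ[f(X)] (in particular Interventional Shapley, Conditional Expectation Shapley, and Marginal Shapley) is not strong T-robust on the subspace Z' for any finite T. -/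
open MeasureTheory ProbabilityTheory

/-- If `μ Z' < 1`, then for every `T ≥ 0` there exist bounded measurable
functions `f₁, f₂` agreeing on `Z'` whose means under `μ` differ by more than `T`.  Hence any
value function with `v(∅) = E_μ[f(X)]` (IS, CES, MS) is not strong T-robust on `Z'` for any
finite `T`. -/
theorem mean_value_function_not_subspace_robust {d : ℕ} (μ : Measure (Fin d → ℝ))
    [IsProbabilityMeasure μ]
    (Z' : Set (Fin d → ℝ)) (hZ'meas : MeasurableSet Z') (hZ'lt : μ Z' < 1) :
    ∀ T : ℝ, 0 ≤ T → ∃ f₁ f₂ : (Fin d → ℝ) → ℝ,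
      Measurable f₁ ∧ Measurable f₂ ∧
      (∃ C : ℝ, ∀ x, |f₁ x| ≤ C) ∧ (∃ C : ℝ, ∀ x, |f₂ x| ≤ C) ∧
      (∀ x ∈ Z', f₁ x = f₂ x) ∧
      T < |(∫ x, f₁ x ∂μ) - ∫ x, f₂ x ∂μ| := by
  intro T hT
  have hμc : μ Z'ᶜ ≠ 0 := by
    intro h
    have : μ Z' = 1 := by
      have := measure_add_measure_compl (μ := μ) hZ'meas
      rw [h, add_zero] at this
      simpa [measure_univ] using this
    exact absurd this hZ'lt.ne
  have hne : μ Z'ᶜ ≠ ⊤ := measure_ne_top μ _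
  set m : ℝ := (μ Z'ᶜ).toReal with hm
  have hmpos : 0 < m := ENNReal.toReal_pos hμc hne
  set c : ℝ := (T + 1) / m with hc
  refine ⟨0, Set.indicator Z'ᶜ (fun _ => c), measurable_const,
    (measurable_const.indicator hZ'meas.compl), ⟨0, by simp⟩,
    ⟨|c|, fun x => ?_⟩, fun x hx => ?_, ?_⟩
  · by_cases h : x ∈ Z'ᶜ <;> simp [Set.indicator_apply, h, abs_nonneg]
  · simp [Set.indicator_apply, hx]
  · rw [integral_indicator_const _ hZ'meas.compl]
    simp only [Pi.zero_apply, integral_zero, zero_sub, abs_neg, smul_eq_mul]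
    have hcm : c * m = T + 1 := div_mul_cancel₀ _ hmpos.ne'
    have : |c * m| = T + 1 := by rw [hcm]; rw [abs_of_nonneg]; linarith
    rw [mul_comm] at this
    rw [show μ.real Z'ᶜ = m from rfl, this]
    linarith
end

section
/- Let p : ℝ^d → [0,∞) be a measurable function and let μ be the measure on ℝ^d with density p with respect to Lebesgue measure, assumed to be a probability measure. Let Z' ⊆ ℝ^d be measurable with μ(Z') < 1. Then for every T ≥ 0 there exist measurable functions f₁, f₂ : ℝ^d → ℝ and a point x ∈ ℝ^d with x ∉ Z' such that f₁ = f₂ on Z' but |f₁(x)·p(x) − f₂(x)·p(x)| > T. Consequently the JBShap value function v(S) = f(x_S, x'_{S̄})·p(x_S, x'_{S̄}) is not strong T-robust on the subspace Z' for any finite T. -/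
open MeasureTheory ProbabilityTheory

/-- Let `μ` be the probability measure on `ℝ^d` with density `p` w.r.t.
Lebesgue measure and let `Z'` be measurable with `μ Z' < 1`.  Then for every `T ≥ 0` there
exist measurable `f₁, f₂` and a point `x ∉ Z'` with `f₁ = f₂` on `Z'` but
`|f₁ x · p x − f₂ x · p x| > T`; hence JBShap is not strong T-robust on `Z'` for any finite
`T`. -/
theorem jbshap_not_subspace_robust {d : ℕ} (p : (Fin d → ℝ) → ℝ)
    (hp_meas : Measurable p) (hp_nonneg : ∀ x, 0 ≤ p x)
    (μ : Measure (Fin d → ℝ))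
    (hμ : μ = volume.withDensity (fun x => ENNReal.ofReal (p x)))
    [IsProbabilityMeasure μ]
    (Z' : Set (Fin d → ℝ)) (hZ'meas : MeasurableSet Z') (hZ'lt : μ Z' < 1) :
    ∀ T : ℝ, 0 ≤ T → ∃ (f₁ f₂ : (Fin d → ℝ) → ℝ) (x : Fin d → ℝ),
      Measurable f₁ ∧ Measurable f₂ ∧ x ∉ Z' ∧
      (∀ y ∈ Z', f₁ y = f₂ y) ∧
      T < |f₁ x * p x - f₂ x * p x| := by
  intro T hT
  have hcompl : 0 < μ Z'ᶜ := by
    have := measure_compl hZ'meas (measure_ne_top μ Z')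
    rw [this, measure_univ]
    exact tsub_pos_of_lt hZ'lt
  have hex : ∃ x, x ∉ Z' ∧ 0 < p x := by
    by_contra h
    push_neg at h
    have : μ Z'ᶜ = 0 := by
      rw [hμ, withDensity_apply _ hZ'meas.compl]
      rw [setLIntegral_congr_fun (g := fun _ => (0:ENNReal)) hZ'meas.compl
        ((fun x hx => by
          have : p x = 0 := le_antisymm (h x hx) (hp_nonneg x)
          simp [this]))]
      simp
    exact hcompl.ne' this
  obtain ⟨x, hx, hpx⟩ := hex
  refine ⟨Z'ᶜ.indicator (fun _ => (T + 1) / p x), fun _ => 0, x,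
    (measurable_const.indicator hZ'meas.compl), measurable_const, hx, ?_, ?_⟩
  · intro y hy
    simp [Set.indicator_apply, hy]
  · rw [Set.indicator_of_mem (by simpa using hx)]
    rw [zero_mul, sub_zero, div_mul_cancel₀ _ hpx.ne']
    rw [abs_of_pos (by linarith)]
    linarith
end

section
/- Let p : ℝ^d → [0,∞) be a measurable function and let μ be the measure on ℝ^d with density p with respect to Lebesgue measure, assumed to be a probability measure. Let Z' ⊆ ℝ^d be measurable with μ(Z') < 1. Then for every T ≥ 0 there exist measurable functions f₁, f₂ : ℝ^d → ℝ such that f₁ = f₂ on Z' but |∫ f₁(x)·p(x) dμ(x) − ∫ f₂(x)·p(x) dμ(x)| > T. Consequently the RJBShap value function, whose value at the empty coalition is E_μ[f(X)·p(X)], is not strong T-robust on the subspace Z' for any finite T. -/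
open MeasureTheory ProbabilityTheory

/-- Let `μ` be the probability measure on `ℝ^d` with density `p` w.r.t.
Lebesgue measure and let `Z'` be measurable with `μ Z' < 1`.  Then for every `T ≥ 0` there
exist measurable `f₁, f₂` with `f₁ = f₂` on `Z'` but
`|∫ f₁·p dμ − ∫ f₂·p dμ| > T`; hence RJBShap (whose value at `∅` is `E_μ[f(X)·p(X)]`) is not
strong T-robust on `Z'` for any finite `T`. -/
theorem rjbshap_not_subspace_robust {d : ℕ} (p : (Fin d → ℝ) → ℝ)
    (hp_meas : Measurable p) (hp_nonneg : ∀ x, 0 ≤ p x)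
    (μ : Measure (Fin d → ℝ))
    (hμ : μ = volume.withDensity (fun x => ENNReal.ofReal (p x)))
    [IsProbabilityMeasure μ]
    (Z' : Set (Fin d → ℝ)) (hZ'meas : MeasurableSet Z') (hZ'lt : μ Z' < 1) :
    ∀ T : ℝ, 0 ≤ T → ∃ f₁ f₂ : (Fin d → ℝ) → ℝ,
      Measurable f₁ ∧ Measurable f₂ ∧
      (∀ y ∈ Z', f₁ y = f₂ y) ∧
      T < |(∫ x, f₁ x * p x ∂μ) - ∫ x, f₂ x * p x ∂μ| := by
  classical
  intro T hT
  have hNmeas : MeasurableSet (p ⁻¹' {0}) := hp_meas (measurableSet_singleton 0)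
  set s : Set (Fin d → ℝ) := Z'ᶜ ∩ (p ⁻¹' {0})ᶜ with hs
  have hsmeas : MeasurableSet s := hZ'meas.compl.inter hNmeas.compl
  have hzero : μ (p ⁻¹' {0}) = 0 := by
    rw [hμ, withDensity_apply _ hNmeas]
    have : ∀ x ∈ p ⁻¹' {0}, ENNReal.ofReal (p x) = 0 := by
      intro x hx
      have : p x = 0 := hx
      simp [this]
    rw [setLIntegral_congr_fun hNmeas this]
    simp
  have hμcompl : μ Z'ᶜ = 1 - μ Z' := by
    rw [measure_compl hZ'meas (measure_ne_top μ Z'), measure_univ]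
  have hsge : μ Z'ᶜ ≤ μ s := by
    have h1 : μ Z'ᶜ ≤ μ s + μ (Z'ᶜ ∩ p ⁻¹' {0}) := by
      refine le_trans (measure_mono ?_) (measure_union_le _ _)
      intro x hx
      by_cases h : p x = 0
      · exact Or.inr ⟨hx, h⟩
      · exact Or.inl ⟨hx, h⟩
    have h2 : μ (Z'ᶜ ∩ p ⁻¹' {0}) = 0 :=
      le_antisymm (le_trans (measure_mono Set.inter_subset_right) hzero.le) zero_le
    simpa [h2] using h1
  have hspos : 0 < μ s := by
    refine lt_of_lt_of_le ?_ hsge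
    rw [hμcompl]
    exact tsub_pos_of_lt hZ'lt
  have hsfin : μ s ≠ ⊤ := measure_ne_top μ s
  set m : ℝ := (μ s).toReal with hm
  have hmpos : 0 < m := ENNReal.toReal_pos hspos.ne' hsfin
  set c : ℝ := (T + 1) / m with hc
  refine ⟨fun _ => 0, fun x => if x ∈ Z' then 0 else c / p x, measurable_const, ?_, ?_, ?_⟩
  · exact Measurable.ite hZ'meas measurable_const (measurable_const.div hp_meas)
  · intro y hy; simp [hy]
  · have key : (fun x => (if x ∈ Z' then 0 else c / p x) * p x)
        = s.indicator (fun _ => c) := by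
      funext x
      by_cases hx : x ∈ Z'
      · simp [hx, hs, Set.indicator_apply, Set.mem_inter_iff]
      · by_cases hp : p x = 0
        · simp [hx, hp, hs, Set.indicator_apply, Set.mem_inter_iff]
        · simp [hx, hp, hs, Set.indicator_apply, Set.mem_inter_iff, div_mul_cancel₀]
    have hint : (∫ x, (if x ∈ Z' then 0 else c / p x) * p x ∂μ) = m * c := by
      rw [key, integral_indicator_const _ hsmeas]
      simp [hm, mul_comm, measureReal_def]
    simp only [zero_mul, integral_zero, zero_sub, abs_neg, hint]
    have : m * c = T + 1 := by
      rw [hc, mul_div_cancel₀ _ hmpos.ne']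
    rw [this, abs_of_nonneg (by linarith)]
    linarith
end

section
/- Let μ be a probability measure on ℝ^d (the joint distribution of features X = (X₁,…,X_d)), let Z = Z₁ × ⋯ × Z_d ⊆ ℝ^d be a product of measurable sets Z_j ⊆ ℝ, and let i ∈ {1,…,d} be such that μ(X_i ∈ Z_i) = 1. Let f : ℝ^d → ℝ be a bounded measurable function that does not depend on its i-th coordinate (f(x) = f(x') whenever x and x' agree on all coordinates except possibly the i-th). Fix x ∈ Z, and for S ⊆ {1,…,d} define v(S) = E_μ[f(x_S, X_{S̄})·1[(x_S, X_{S̄}) ∈ Z]] / E_μ[1[(x_S, X_{S̄}) ∈ Z]], where (x_S, X_{S̄}) denotes the vector whose coordinates in S are x and whose coordinates outside S are X. Then for every S ⊆ {1,…,d} with i ∉ S (and the relevant denominators positive), v(S) = v(S ∪ {i}). Consequently the Shapley value of feature i under this value function is zero (Sensitivity). -/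
open MeasureTheory ProbabilityTheory

/-- `paste S x y` is the vector `(x_S, y_{S̄})`: coordinates in `S` are taken from `x`,
the remaining coordinates from `y`. -/
def paste {d : ℕ} (S : Finset (Fin d)) (x y : Fin d → ℝ) : Fin d → ℝ :=
  fun j => if j ∈ S then x j else y j

/-- The ManifoldShap value function (in the setting where the interventional distribution
coincides with the marginal):
`v(S) = E_μ[f(x_S, X_{S̄})·1[(x_S, X_{S̄}) ∈ Z]] / E_μ[1[(x_S, X_{S̄}) ∈ Z]]`. -/
noncomputable def manifoldVal {d : ℕ} (μ : Measure (Fin d → ℝ)) (Z : Set (Fin d → ℝ))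
    (f : (Fin d → ℝ) → ℝ) (x : Fin d → ℝ) (S : Finset (Fin d)) : ℝ :=
  (∫ y, Z.indicator f (paste S x y) ∂μ) /
    ∫ y, Z.indicator (fun _ => (1 : ℝ)) (paste S x y) ∂μ

/-- **Sensitivity.** Let `Z = Z₁ × ⋯ × Z_d` be a measurable product set with
`μ(X_i ∈ Z_i) = 1`, let `f` be bounded measurable and independent of its `i`-th coordinate,
and fix `x ∈ Z`.  Then for every coalition `S` not containing `i` (with the relevant
denominators positive), `v(S) = v(S ∪ {i})`. -/
theorem manifoldShap_sensitivity {d : ℕ} (μ : Measure (Fin d → ℝ)) [IsProbabilityMeasure μ]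
    (Zs : Fin d → Set ℝ) (hZs : ∀ j, MeasurableSet (Zs j))
    (i : Fin d) (hi : μ {y | y i ∈ Zs i} = 1)
    (f : (Fin d → ℝ) → ℝ) (hf_meas : Measurable f) (hf_bdd : ∃ C : ℝ, ∀ x, |f x| ≤ C)
    (hf_indep : ∀ x x' : Fin d → ℝ, (∀ j, j ≠ i → x j = x' j) → f x = f x')
    (x : Fin d → ℝ) (hx : ∀ j, x j ∈ Zs j) :
    ∀ S : Finset (Fin d), i ∉ S →
      (0 < ∫ y, ({z | ∀ j, z j ∈ Zs j} : Set (Fin d → ℝ)).indicator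
              (fun _ => (1 : ℝ)) (paste S x y) ∂μ) →
      (0 < ∫ y, ({z | ∀ j, z j ∈ Zs j} : Set (Fin d → ℝ)).indicator
              (fun _ => (1 : ℝ)) (paste (insert i S) x y) ∂μ) →
      manifoldVal μ {z | ∀ j, z j ∈ Zs j} f x S =
        manifoldVal μ {z | ∀ j, z j ∈ Zs j} f x (insert i S) := by
  intro S hiS _ _
  have hae : ∀ᵐ y ∂μ, y i ∈ Zs i := by
    have hm : MeasurableSet {y : Fin d → ℝ | y i ∈ Zs i} :=
      (hZs i).preimage (measurable_pi_apply i)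
    rw [ae_iff]
    have : {y : Fin d → ℝ | ¬ y i ∈ Zs i} = {y : Fin d → ℝ | y i ∈ Zs i}ᶜ := rfl
    rw [this, measure_compl hm (measure_ne_top μ _), hi, measure_univ]
    simp
  have key : ∀ y : Fin d → ℝ, y i ∈ Zs i →
      ((paste S x y ∈ {z : Fin d → ℝ | ∀ j, z j ∈ Zs j}) ↔
        (paste (insert i S) x y ∈ {z : Fin d → ℝ | ∀ j, z j ∈ Zs j})) ∧
      f (paste S x y) = f (paste (insert i S) x y) := by
    intro y hy
    have hagree : ∀ j, j ≠ i → paste S x y j = paste (insert i S) x y j := by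
      intro j hj
      simp [paste, Finset.mem_insert, hj]
    constructor
    · constructor
      · intro h j
        by_cases hj : j = i
        · subst hj
          simpa [paste] using hx j
        · rw [← hagree j hj]; exact h j
      · intro h j
        by_cases hj : j = i
        · subst hj
          simpa [paste, hiS] using hy
        · rw [hagree j hj]; exact h j
    · exact hf_indep _ _ hagree
  unfold manifoldVal
  congr 1
  · refine integral_congr_ae ?_
    filter_upwards [hae] with y hy
    obtain ⟨hmem, hfeq⟩ := key y hy
    by_cases h : paste S x y ∈ {z : Fin d → ℝ | ∀ j, z j ∈ Zs j}
    · rw [Set.indicator_of_mem h, Set.indicator_of_mem (hmem.mp h), hfeq]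
    · rw [Set.indicator_of_notMem h, Set.indicator_of_notMem (fun hc => h (hmem.mpr hc))]
  · refine integral_congr_ae ?_
    filter_upwards [hae] with y hy
    obtain ⟨hmem, _⟩ := key y hy
    by_cases h : paste S x y ∈ {z : Fin d → ℝ | ∀ j, z j ∈ Zs j}
    · rw [Set.indicator_of_mem h, Set.indicator_of_mem (hmem.mp h)]
    · rw [Set.indicator_of_notMem h, Set.indicator_of_notMem (fun hc => h (hmem.mpr hc))]
end

section
/- Let μ be a probability measure on ℝ^d that is invariant under the coordinate transposition σ swapping coordinates i and j, let Z ⊆ ℝ^d be a measurable set invariant under σ (x ∈ Z ⟺ σ(x) ∈ Z), and let f : ℝ^d → ℝ be a bounded measurable function symmetric in coordinates i and j on Z (f(σ(x)) = f(x) for x ∈ Z). Fix x ∈ Z with x_i = x_j, and for S ⊆ {1,…,d} define v(S) = E_μ[f(x_S, X_{S̄})·1[(x_S, X_{S̄}) ∈ Z]] / E_μ[1[(x_S, X_{S̄}) ∈ Z]]. Then for every S ⊆ {1,…,d} \ {i, j} (with the relevant denominators positive), v(S ∪ {i}) = v(S ∪ {j}). Consequently the Shapley values of features i and j are equal (Symmetry).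 -/
open MeasureTheory ProbabilityTheory

/-- **Symmetry.** Suppose `μ`, `Z` and `f` (on `Z`) are invariant under the
transposition of coordinates `i` and `j`, and fix `x ∈ Z` with `x i = x j`.  Then for every
coalition `S` avoiding `i` and `j` (with the relevant denominators positive),
`v(S ∪ {i}) = v(S ∪ {j})`. -/
theorem manifoldShap_symmetry {d : ℕ} (μ : Measure (Fin d → ℝ)) [IsProbabilityMeasure μ]
    (i j : Fin d)
    (hμ_symm : μ.map (fun y : Fin d → ℝ => y ∘ Equiv.swap i j) = μ)
    (Z : Set (Fin d → ℝ)) (hZmeas : MeasurableSet Z)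
    (hZ_symm : ∀ y : Fin d → ℝ, y ∈ Z ↔ (y ∘ Equiv.swap i j) ∈ Z)
    (f : (Fin d → ℝ) → ℝ) (hf_meas : Measurable f) (hf_bdd : ∃ C : ℝ, ∀ y, |f y| ≤ C)
    (hf_symm : ∀ y ∈ Z, f (y ∘ Equiv.swap i j) = f y)
    (x : Fin d → ℝ) (hx : x ∈ Z) (hxij : x i = x j) :
    ∀ S : Finset (Fin d), i ∉ S → j ∉ S →
      (0 < ∫ y, Z.indicator (fun _ => (1 : ℝ)) (paste (insert i S) x y) ∂μ) →
      (0 < ∫ y, Z.indicator (fun _ => (1 : ℝ)) (paste (insert j S) x y) ∂μ) →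
      manifoldVal μ Z f x (insert i S) = manifoldVal μ Z f x (insert j S) := by
  intro S hiS hjS _ _
  rcases eq_or_ne i j with rfl | hij
  · rfl
  set σ : Equiv.Perm (Fin d) := Equiv.swap i j with hσ
  -- key pointwise identity
  have hpaste : ∀ y : Fin d → ℝ,
      paste (insert i S) x (y ∘ σ) = (paste (insert j S) x y) ∘ σ := by
    intro y
    funext k
    by_cases hki : k = i
    · subst hki
      simp [paste, σ, Equiv.swap_apply_left, hjS, hxij]
    by_cases hkj : k = j
    · subst hkj
      simp [paste, σ, Equiv.swap_apply_right, hij, Ne.symm hij, hiS, hjS]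
    · have : σ k = k := Equiv.swap_apply_of_ne_of_ne hki hkj
      simp [paste, this, hki, hkj]
  -- indicator invariance
  have hindf : ∀ w : Fin d → ℝ, Z.indicator f (w ∘ σ) = Z.indicator f w := by
    intro w
    by_cases hw : w ∈ Z
    · rw [Set.indicator_of_mem hw, Set.indicator_of_mem ((hZ_symm w).1 hw), hf_symm w hw]
    · rw [Set.indicator_of_notMem hw,
        Set.indicator_of_notMem (fun h => hw ((hZ_symm w).2 h))]
  have hind1 : ∀ w : Fin d → ℝ,
      Z.indicator (fun _ => (1:ℝ)) (w ∘ σ) = Z.indicator (fun _ => (1:ℝ)) w := by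
    intro w
    by_cases hw : w ∈ Z
    · rw [Set.indicator_of_mem hw, Set.indicator_of_mem ((hZ_symm w).1 hw)]
    · rw [Set.indicator_of_notMem hw,
        Set.indicator_of_notMem (fun h => hw ((hZ_symm w).2 h))]
  have hTmeas : Measurable (fun y : Fin d → ℝ => y ∘ σ) := by
    exact measurable_pi_lambda _ (fun k => measurable_pi_apply (σ k))
  have hpastemeas : ∀ T : Finset (Fin d), Measurable (fun y : Fin d → ℝ => paste T x y) := by
    intro T
    exact measurable_pi_lambda _ (fun k => by
      unfold paste
      by_cases hk : k ∈ T
      · simpa [hk] using (measurable_const : Measurable fun _ : Fin d → ℝ => x k)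
      · simpa [hk] using measurable_pi_apply k)
  -- general integral identity
  have key : ∀ g : (Fin d → ℝ) → ℝ, Measurable g →
      (∀ w, g (w ∘ σ) = g w) →
      (∫ y, g (paste (insert i S) x y) ∂μ) = ∫ y, g (paste (insert j S) x y) ∂μ := by
    intro g hg hgsym
    have h1 : (∫ y, g (paste (insert i S) x y) ∂μ)
        = ∫ y, g (paste (insert i S) x (y ∘ σ)) ∂μ := by
      conv_lhs => rw [← hμ_symm]
      rw [integral_map hTmeas.aemeasurable
        (by rw [hμ_symm]; exact (hg.comp (hpastemeas _)).aestronglyMeasurable)]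
    rw [h1]
    congr 1
    funext y
    rw [hpaste y, hgsym]
  have keyf := key (Z.indicator f) (hf_meas.indicator hZmeas) hindf
  have key1 := key (Z.indicator fun _ => (1:ℝ)) (measurable_const.indicator hZmeas) hind1
  unfold manifoldVal
  rw [keyf, key1]
end

section
/- Let μ be a probability measure on ℝ^d whose image under a coordinate transposition σ (swapping coordinates i and j) is μ itself, and let m : ℝ^d → ℝ be a bounded measurable function with m ∘ σ = m. Fix x ∈ ℝ^d with x_i = x_j. Then for every S ⊆ {1,…,d} \ {i, j}: E_μ[m(x_{S ∪ {i}}, X_{S̄ \ {i}})] = E_μ[m(x_{S ∪ {j}}, X_{S̄ \ {j}})], where (x_T, X_{T̄}) denotes the random vector whose coordinates in T are fixed to those of x and whose remaining coordinates are drawn as X ∼ μ. -/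
open MeasureTheory ProbabilityTheory

lemma paste_measurable {d : ℕ} (S : Finset (Fin d)) (x : Fin d → ℝ) :
    Measurable (paste S x) := by
  apply measurable_pi_lambda
  intro k
  by_cases h : k ∈ S
  · simp only [paste, h, if_true]; exact measurable_const
  · simp only [paste, h, if_false]; exact measurable_pi_apply k

/-- **exchange lemma.** If `μ` is invariant under the transposition of
coordinates `i` and `j`, `m` is a bounded measurable function with `m ∘ σ = m`, and
`x i = x j`, then for every coalition `S` avoiding `i` and `j`,
`E_μ[m(x_{S∪{i}}, X_{rest})] = E_μ[m(x_{S∪{j}}, X_{rest})]`. -/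
theorem symmetry_exchange_lemma {d : ℕ} (μ : Measure (Fin d → ℝ)) [IsProbabilityMeasure μ]
    (i j : Fin d)
    (hμ_symm : μ.map (fun y : Fin d → ℝ => y ∘ Equiv.swap i j) = μ)
    (m : (Fin d → ℝ) → ℝ) (hm_meas : Measurable m) (hm_bdd : ∃ C : ℝ, ∀ y, |m y| ≤ C)
    (hm_symm : ∀ y : Fin d → ℝ, m (y ∘ Equiv.swap i j) = m y)
    (x : Fin d → ℝ) (hxij : x i = x j) :
    ∀ S : Finset (Fin d), i ∉ S → j ∉ S →
      ∫ y, m (paste (insert i S) x y) ∂μ = ∫ y, m (paste (insert j S) x y) ∂μ := by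
  intro S hiS hjS
  by_cases hij : i = j
  · subst hij; rfl
  have hσ : Measurable (fun y : Fin d → ℝ => y ∘ Equiv.swap i j) :=
    measurable_pi_lambda _ (fun k => measurable_pi_apply _)
  have key : ∀ y : Fin d → ℝ,
      paste (insert i S) x (y ∘ Equiv.swap i j) = (paste (insert j S) x y) ∘ Equiv.swap i j := by
    intro y
    funext k
    simp only [Function.comp, paste]
    rcases eq_or_ne k i with rfl | hki
    · simp [Equiv.swap_apply_left, hij, Ne.symm hij, hjS, hxij]
    rcases eq_or_ne k j with rfl | hkj
    · simp [Equiv.swap_apply_right, hij, Ne.symm hij, hiS, hjS]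
    · rw [Equiv.swap_apply_of_ne_of_ne hki hkj]
      simp [Finset.mem_insert, hki, hkj]
  calc ∫ y, m (paste (insert i S) x y) ∂μ
      = ∫ y, m (paste (insert i S) x y) ∂(μ.map (fun y : Fin d → ℝ => y ∘ Equiv.swap i j)) := by
        rw [hμ_symm]
    _ = ∫ y, m (paste (insert i S) x (y ∘ Equiv.swap i j)) ∂μ := by
        rw [integral_map hσ.aemeasurable]
        exact (hm_meas.comp (paste_measurable _ _)).aestronglyMeasurable
    _ = ∫ y, m (paste (insert j S) x y) ∂μ := by
        congr 1; funext y; rw [key y, hm_symm]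
end

section
/- Let p : ℝ^d → [0,∞) be measurable and let μ be the measure with density p with respect to Lebesgue measure λ on ℝ^d, assumed a probability measure. Fix ε > 0 and let P = {x ∈ ℝ^d : p(x) ≥ ε}. Then for every measurable set Z ⊆ ℝ^d with μ(Z) ≥ μ(P), the Lebesgue measures satisfy λ(Z) ≥ λ(P). (The α-mass manifold has the smallest Lebesgue measure among all sets carrying at least probability mass μ(P).) -/
open MeasureTheory ProbabilityTheory

/-- Let `μ` be the probability measure with density `p` w.r.t. Lebesgue
measure on `ℝ^d`, `ε > 0`, and `P = {x | p x ≥ ε}`.  Then every measurable set `Z` with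
`μ Z ≥ μ P` has Lebesgue measure at least that of `P`: the mass manifold has the smallest
Lebesgue measure among all sets carrying at least its probability mass. -/
theorem mass_manifold_minimal_lebesgue {d : ℕ} (p : (Fin d → ℝ) → ℝ)
    (hp_meas : Measurable p) (hp_nonneg : ∀ x, 0 ≤ p x)
    (μ : Measure (Fin d → ℝ))
    (hμ : μ = volume.withDensity (fun x => ENNReal.ofReal (p x)))
    [IsProbabilityMeasure μ]
    (ε : ℝ) (hε : 0 < ε)
    (Z : Set (Fin d → ℝ)) (hZmeas : MeasurableSet Z)
    (hmass : μ {x | ε ≤ p x} ≤ μ Z) :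
    volume {x | ε ≤ p x} ≤ volume Z := by
  set P : Set (Fin d → ℝ) := {x | ε ≤ p x} with hP
  have hPmeas : MeasurableSet P := measurableSet_le measurable_const hp_meas
  set e : ENNReal := ENNReal.ofReal ε with he
  have he0 : e ≠ 0 := by simp [he, hε]
  have heT : e ≠ ⊤ := ENNReal.ofReal_ne_top
  have hμapp : ∀ s : Set (Fin d → ℝ), MeasurableSet s →
      μ s = ∫⁻ x in s, ENNReal.ofReal (p x) := by
    intro s hs
    rw [hμ, withDensity_apply _ hs]
  -- lower bound on P \ Z
  have h1 : e * volume (P \ Z) ≤ μ (P \ Z) := by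
    rw [hμapp _ (hPmeas.diff hZmeas)]
    calc e * volume (P \ Z) = ∫⁻ _x in P \ Z, e := (setLIntegral_const _ _).symm
      _ ≤ ∫⁻ x in P \ Z, ENNReal.ofReal (p x) := by
          apply setLIntegral_mono' (hPmeas.diff hZmeas)
          intro x hx
          exact ENNReal.ofReal_le_ofReal hx.1
  -- upper bound on Z \ P
  have h2 : μ (Z \ P) ≤ e * volume (Z \ P) := by
    rw [hμapp _ (hZmeas.diff hPmeas)]
    calc ∫⁻ x in Z \ P, ENNReal.ofReal (p x)
        ≤ ∫⁻ _x in Z \ P, e := by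
          apply setLIntegral_mono' (hZmeas.diff hPmeas)
          intro x hx
          exact ENNReal.ofReal_le_ofReal (le_of_lt (not_le.mp hx.2))
      _ = e * volume (Z \ P) := setLIntegral_const _ _
  -- μ (P \ Z) ≤ μ (Z \ P)
  have hfin : μ (P ∩ Z) ≠ ⊤ := (measure_lt_top μ _).ne
  have h3 : μ (P \ Z) ≤ μ (Z \ P) := by
    have hPe : μ (P ∩ Z) + μ (P \ Z) = μ P := measure_inter_add_diff P hZmeas
    have hZe : μ (Z ∩ P) + μ (Z \ P) = μ Z := measure_inter_add_diff Z hPmeas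
    have hcomm : Z ∩ P = P ∩ Z := Set.inter_comm Z P
    have : μ (P ∩ Z) + μ (P \ Z) ≤ μ (P ∩ Z) + μ (Z \ P) := by
      rw [hPe]; rw [hcomm] at hZe; rw [hZe]; exact hmass
    exact (ENNReal.add_le_add_iff_left hfin).mp this
  -- λ (P \ Z) ≤ λ (Z \ P)
  have h4 : volume (P \ Z) ≤ volume (Z \ P) := by
    have : e * volume (P \ Z) ≤ e * volume (Z \ P) := h1.trans (h3.trans h2)
    exact (ENNReal.mul_le_mul_iff_right he0 heT).mp this
  calc volume P = volume (P ∩ Z) + volume (P \ Z) := (measure_inter_add_diff P hZmeas).symm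
    _ ≤ volume (Z ∩ P) + volume (Z \ P) := by
        rw [Set.inter_comm Z P]; exact add_le_add le_rfl h4
    _ = volume Z := measure_inter_add_diff Z hPmeas
end

section
/- Let Z, X₁, X₂ be {0,1}-valued random variables with Z ~ Bernoulli(1/2), X₁ = Z, and P(X₂ = Z | Z) = p for a fixed p ∈ (0,1), and let f(x₁,x₂) = x₁. Define the Conditional Expectation Shapley value for feature 2 at the point (x₁,x₂) as φ₂ = (1/2)·[(E[f(X₁,X₂) | X₂ = x₂] − E[f(X₁,X₂)]) + (E[f(X₁,X₂) | X₁ = x₁, X₂ = x₂] − E[f(X₁,X₂) | X₁ = x₁])]. Then φ₂ = (1/2)·(p·1[x₂ = 1] + (1 − p)·1[x₂ = 0] − 1/2), which is nonzero whenever p ≠ 1/2. -/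
open MeasureTheory ProbabilityTheory

private lemma int_indicator_aux {Ω : Type*} [MeasurableSpace Ω] (μ : Measure Ω) (Z : Ω → ℝ)
    (hZm : Measurable Z) (hZval : ∀ ω, Z ω = 0 ∨ Z ω = 1) :
    ∫ ω, Z ω ∂μ = (μ {ω | Z ω = 1}).toReal := by
  have hs : MeasurableSet {ω | Z ω = 1} := hZm (measurableSet_singleton 1)
  have hfun : (fun ω => Z ω) = Set.indicator {ω | Z ω = 1} (fun _ => (1:ℝ)) := by
    funext ω; rcases hZval ω with h | h <;> simp [Set.indicator, h]
  rw [hfun, MeasureTheory.integral_indicator_const _ hs]; simp [measureReal_def]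

/-- In the confounded Bernoulli example (with `X₁ = Z ~ Bernoulli(1/2)`
and `X₂ = Z` with probability `p`), for the model `f(x₁,x₂) = x₁` the Conditional
Expectation Shapley value of feature 2 at `(x₁, x₂) ∈ {0,1}²` equals
`(1/2)·(p·1[x₂ = 1] + (1 − p)·1[x₂ = 0] − 1/2)`, which is nonzero whenever `p ≠ 1/2`. -/
theorem ces_violates_sensitivity {Ω : Type*} [MeasurableSpace Ω]
    (P : Measure Ω) [IsProbabilityMeasure P]
    (Z X₁ X₂ : Ω → ℝ) (hZm : Measurable Z) (hX₁m : Measurable X₁) (hX₂m : Measurable X₂)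
    (hZval : ∀ ω, Z ω = 0 ∨ Z ω = 1)
    (hZhalf : P {ω | Z ω = 1} = 1/2)
    (hX₁ : X₁ = Z)
    (hX₂val : ∀ ω, X₂ ω = 0 ∨ X₂ ω = 1)
    (p : ℝ) (hp0 : 0 < p) (hp1 : p < 1)
    (hcond : ∀ z : ℝ, z = 0 ∨ z = 1 →
      P ({ω | X₂ ω = Z ω} ∩ {ω | Z ω = z}) = ENNReal.ofReal p * P {ω | Z ω = z})
    (f : ℝ → ℝ → ℝ) (hf : ∀ a b, f a b = a)
    (x₁ x₂ : ℝ) (hx₁ : x₁ = 0 ∨ x₁ = 1) (hx₂ : x₂ = 0 ∨ x₂ = 1) :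
    (1/2 : ℝ) *
        (((∫ ω, f (X₁ ω) (X₂ ω) ∂(P[|{ω | X₂ ω = x₂}])) - ∫ ω, f (X₁ ω) (X₂ ω) ∂P) +
          ((∫ ω, f (X₁ ω) (X₂ ω) ∂(P[|{ω | X₁ ω = x₁} ∩ {ω | X₂ ω = x₂}])) -
            ∫ ω, f (X₁ ω) (X₂ ω) ∂(P[|{ω | X₁ ω = x₁}]))) =
      (1/2) * (p * (if x₂ = 1 then 1 else 0) + (1 - p) * (if x₂ = 0 then 1 else 0) - 1/2) ∧
    (p ≠ 1/2 →
      (1/2 : ℝ) *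
          (((∫ ω, f (X₁ ω) (X₂ ω) ∂(P[|{ω | X₂ ω = x₂}])) - ∫ ω, f (X₁ ω) (X₂ ω) ∂P) +
            ((∫ ω, f (X₁ ω) (X₂ ω) ∂(P[|{ω | X₁ ω = x₁} ∩ {ω | X₂ ω = x₂}])) -
              ∫ ω, f (X₁ ω) (X₂ ω) ∂(P[|{ω | X₁ ω = x₁}]))) ≠ 0) := by
  subst hX₁
  simp only [hf]
  -- basic measurability
  have hmE1 : MeasurableSet {ω | X₁ ω = 1} := hZm (measurableSet_singleton 1)
  have hmE0 : MeasurableSet {ω | X₁ ω = 0} := hZm (measurableSet_singleton 0)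
  have hmS1 : MeasurableSet {ω | X₂ ω = 1} := hX₂m (measurableSet_singleton 1)
  have hmS0 : MeasurableSet {ω | X₂ ω = 0} := hX₂m (measurableSet_singleton 0)
  -- q facts
  have hq0 : ENNReal.ofReal p ≠ 0 := (ENNReal.ofReal_pos.mpr hp0).ne'
  have hq1 : ENNReal.ofReal p ≤ 1 := ENNReal.ofReal_le_one.mpr hp1.le
  have hqlt : ENNReal.ofReal p < 1 := ENNReal.ofReal_lt_one.mpr hp1
  have hle : ENNReal.ofReal p * (1/2) ≤ (1/2 : ENNReal) := by
    calc ENNReal.ofReal p * (1/2) ≤ 1 * (1/2) := mul_le_mul_left hq1 _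
    _ = 1/2 := one_mul _
  have hlt : ENNReal.ofReal p * (1/2) < (1/2 : ENNReal) := by
    calc ENNReal.ofReal p * (1/2) < 1 * (1/2) :=
      (by rw [mul_comm _ (1/2 : ENNReal), mul_comm 1]; exact ENNReal.mul_lt_mul_right (by norm_num) (by norm_num) hqlt)
    _ = 1/2 := one_mul _
  -- measure of Z = 0
  have hE0 : P {ω | X₁ ω = 0} = 1/2 := by
    have h : {ω | X₁ ω = 0} = {ω | X₁ ω = 1}ᶜ := by
      ext ω; rcases hZval ω with h|h <;> simp [h]
    rw [h, measure_compl hmE1 (measure_ne_top _ _), measure_univ, hZhalf]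
    norm_num
  -- intersections with Z-levels
  have hS1E1 : P ({ω | X₂ ω = 1} ∩ {ω | X₁ ω = 1}) = ENNReal.ofReal p * (1/2) := by
    have h : {ω | X₂ ω = 1} ∩ {ω | X₁ ω = 1} = {ω | X₂ ω = X₁ ω} ∩ {ω | X₁ ω = 1} := by
      ext ω; simp only [Set.mem_inter_iff, Set.mem_setOf_eq]
      constructor <;> rintro ⟨a, b⟩ <;> exact ⟨by rw [a, b], b⟩
    rw [h, hcond 1 (Or.inr rfl), hZhalf]
  have hS0E0 : P ({ω | X₂ ω = 0} ∩ {ω | X₁ ω = 0}) = ENNReal.ofReal p * (1/2) := by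
    have h : {ω | X₂ ω = 0} ∩ {ω | X₁ ω = 0} = {ω | X₂ ω = X₁ ω} ∩ {ω | X₁ ω = 0} := by
      ext ω; simp only [Set.mem_inter_iff, Set.mem_setOf_eq]
      constructor <;> rintro ⟨a, b⟩ <;> exact ⟨by rw [a, b], b⟩
    rw [h, hcond 0 (Or.inl rfl), hE0]
  have hS0E1 : P ({ω | X₂ ω = 0} ∩ {ω | X₁ ω = 1}) = 1/2 - ENNReal.ofReal p * (1/2) := by
    have h : {ω | X₂ ω = 0} ∩ {ω | X₁ ω = 1}
        = {ω | X₁ ω = 1} \ ({ω | X₂ ω = 1} ∩ {ω | X₁ ω = 1}) := by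
      ext ω; rcases hX₂val ω with h|h <;> simp [h]
    rw [h, measure_diff Set.inter_subset_right (hmS1.inter hmE1).nullMeasurableSet
      (measure_ne_top _ _), hZhalf, hS1E1]
  have hS1E0 : P ({ω | X₂ ω = 1} ∩ {ω | X₁ ω = 0}) = 1/2 - ENNReal.ofReal p * (1/2) := by
    have h : {ω | X₂ ω = 1} ∩ {ω | X₁ ω = 0}
        = {ω | X₁ ω = 0} \ ({ω | X₂ ω = 0} ∩ {ω | X₁ ω = 0}) := by
      ext ω; rcases hX₂val ω with h|h <;> simp [h]
    rw [h, measure_diff Set.inter_subset_right (hmS0.inter hmE0).nullMeasurableSet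
      (measure_ne_top _ _), hE0, hS0E0]
  -- marginal of X₂
  have hPS : ∀ c : ℝ,
      P ({ω | X₂ ω = c} ∩ {ω | X₁ ω = 1}) + P ({ω | X₂ ω = c} ∩ {ω | X₁ ω = 0})
        = P {ω | X₂ ω = c} := by
    intro c
    have hsplit : {ω | X₂ ω = c}
        = ({ω | X₂ ω = c} ∩ {ω | X₁ ω = 1}) ∪ ({ω | X₂ ω = c} ∩ {ω | X₁ ω = 0}) := by
      ext ω; rcases hZval ω with h|h <;> simp [h]
    have hdisj : Disjoint ({ω | X₂ ω = c} ∩ {ω | X₁ ω = 1})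
        ({ω | X₂ ω = c} ∩ {ω | X₁ ω = 0}) := by
      apply Set.disjoint_left.mpr
      rintro ω ⟨-, h1⟩ ⟨-, h0⟩
      rw [Set.mem_setOf_eq] at h1 h0; rw [h0] at h1; norm_num at h1
    rw [← measure_union hdisj
      ((hX₂m (measurableSet_singleton c)).inter hmE0), ← hsplit]
  have hPS1 : P {ω | X₂ ω = 1} = 1/2 := by
    rw [← hPS 1, hS1E1, hS1E0, add_tsub_cancel_of_le hle]
  have hPS0 : P {ω | X₂ ω = 0} = 1/2 := by
    rw [← hPS 0, hS0E1, hS0E0, tsub_add_cancel_of_le hle]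
  -- integral reductions
  have hint : ∀ μ : Measure Ω, ∫ ω, X₁ ω ∂μ = (μ {ω | X₁ ω = 1}).toReal :=
    fun μ => int_indicator_aux μ X₁ hZm hZval
  have I0 : ∫ ω, X₁ ω ∂P = 1/2 := by rw [hint, hZhalf]; simp
  -- value of E[Z | X₂ = x₂]
  have I2 : ∫ ω, X₁ ω ∂(P[|{ω | X₂ ω = x₂}]) = if x₂ = 1 then p else 1 - p := by
    rcases hx₂ with rfl | rfl
    · rw [if_neg (by norm_num), hint, cond_apply hmS0, hPS0, hS0E1]
      rw [ENNReal.toReal_mul, ENNReal.toReal_inv,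
        ENNReal.toReal_sub_of_le hle (by norm_num), ENNReal.toReal_mul,
        ENNReal.toReal_ofReal hp0.le]
      norm_num; ring
    · rw [if_pos rfl, hint, cond_apply hmS1, hPS1, hS1E1]
      rw [ENNReal.toReal_mul, ENNReal.toReal_mul, ENNReal.toReal_inv,
        ENNReal.toReal_ofReal hp0.le]
      norm_num; ring
  -- the conditional terms in the second bracket cancel
  have Ione : ∀ T : Set Ω, MeasurableSet T → T ⊆ {ω | X₁ ω = 1} → P T ≠ 0 →
      ∫ ω, X₁ ω ∂(P[|T]) = 1 := by
    intro T hmT hsub h0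
    rw [hint, cond_apply hmT, Set.inter_eq_left.mpr hsub,
      ENNReal.inv_mul_cancel h0 (measure_ne_top _ _)]
    simp
  have Izero : ∀ T : Set Ω, MeasurableSet T → T ∩ {ω | X₁ ω = 1} = ∅ →
      ∫ ω, X₁ ω ∂(P[|T]) = 0 := by
    intro T hmT hdis
    rw [hint, cond_apply hmT, hdis]
    simp
  have hmSx : MeasurableSet {ω | X₂ ω = x₂} := hX₂m (measurableSet_singleton x₂)
  have hbr2 : (∫ ω, X₁ ω ∂(P[|{ω | X₁ ω = x₁} ∩ {ω | X₂ ω = x₂}])) -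
      ∫ ω, X₁ ω ∂(P[|{ω | X₁ ω = x₁}]) = 0 := by
    rcases hx₁ with rfl | rfl
    · -- x₁ = 0 : both integrals are 0
      rw [Izero _ (hmE0.inter hmSx) ?_, Izero _ hmE0 ?_, sub_zero]
      · ext ω
        simp only [Set.mem_inter_iff, Set.mem_setOf_eq, Set.mem_empty_iff_false,
          iff_false, not_and]
        intro h0 h1; rw [h0] at h1; norm_num at h1
      · ext ω
        simp only [Set.mem_inter_iff, Set.mem_setOf_eq, Set.mem_empty_iff_false,
          iff_false, not_and]
        rintro ⟨h0, -⟩ h1; rw [h0] at h1; norm_num at h1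
    · -- x₁ = 1 : both integrals are 1
      have hPT : P ({ω | X₁ ω = 1} ∩ {ω | X₂ ω = x₂}) ≠ 0 := by
        rw [Set.inter_comm]
        rcases hx₂ with rfl | rfl
        · rw [hS0E1]; exact (tsub_pos_of_lt hlt).ne'
        · rw [hS1E1]; exact mul_ne_zero hq0 (by norm_num)
      rw [Ione _ (hmE1.inter hmSx) Set.inter_subset_left hPT,
        Ione _ hmE1 le_rfl (by rw [hZhalf]; norm_num), sub_self]
  have key : (1/2 : ℝ) *
      (((∫ ω, X₁ ω ∂(P[|{ω | X₂ ω = x₂}])) - ∫ ω, X₁ ω ∂P) +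
        ((∫ ω, X₁ ω ∂(P[|{ω | X₁ ω = x₁} ∩ {ω | X₂ ω = x₂}])) -
          ∫ ω, X₁ ω ∂(P[|{ω | X₁ ω = x₁}]))) =
      (1/2) * (p * (if x₂ = 1 then 1 else 0) + (1 - p) * (if x₂ = 0 then 1 else 0) - 1/2) := by
    rw [I0, I2]
    rw [sub_eq_zero] at hbr2
    rw [hbr2, sub_self, add_zero]
    rcases hx₂ with rfl | rfl <;> · norm_num; try ring
  refine ⟨key, fun hpne => ?_⟩
  rw [key]
  rcases hx₂ with rfl | rfl <;>
    · intro h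
      apply hpne
      norm_num at h
      linarith
end
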